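/- arXiv:1304.6838 — 4 statements merged into one kernel-verified Lean document; each statement's English description precedes it below -/
import Mathlib

section
/- Let p be a prime and A a set of p nonnegative integers. If there exists an additive complement B of A (i.e., R_{A+B}(n) ≥ 1 for all large n) with liminf_{x→∞}(A(x)B(x) − x) < ∞, then A has the form A = {a + i·p^s + k_i·p^{s+1} : i = 0, ..., p−1} for some integers a ≥ 0, s ≥ 0 and k₀, ..., k_{p−1}. -/
noncomputable def cnt (S : Set ℕ) (x : ℕ) : ℕ := (S ∩ Set.Iic x).ncard

noncomputable def rep (A B : Set ℕ) (n : ℕ) : ℕ :=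
  {q : ℕ × ℕ | q.1 ∈ A ∧ q.2 ∈ B ∧ q.1 + q.2 = n}.ncard

/-!
The counting hypothesis forces `A ⊕ B` to tile all large integers exactly: `∑_{n ≤ x} R(n)` is
at most `p B(x) ≤ x + C` for infinitely many `x`, so only finitely many `n` have `R(n) ≥ 2`.
An exact tiling by a finite set is eventually periodic, with some period `m`, so `A ⊕ S = ℤ/mℤ`
for a set of residues `S`. Hence `p |S| = m`, and `A(ζ) S(ζ) = 0` for every `m`-th root of unity
`ζ ≠ 1`, where `A(ζ) = ∑_{a ∈ A} ζ^a`. If `A(ζ)` vanished at no `p^t`-th root of unity `ζ ≠ 1`,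
where `p^t ∥ m`, then `S(ζ)` would vanish at all of them, forcing `p^t ∣ |S|` and `p^(t+1) ∣ m`.
So `A(ζ) = 0` for a primitive `p^(j+1)`-th root `ζ`, and `Φ_{p^(j+1)} = ∑_{i < p} X^(i p^j)`
divides `∑_{a ∈ A} X^(a mod p^(j+1))`. Degrees and the value at `1` show that the quotient has
nonnegative coefficients summing to `1`, so it is a monomial `X^r`: the residues of `A` modulo
`p^(j+1)` are exactly `r + i p^j`, `i < p`.
-/

open Finset Filter Polynomial

open scoped Classical in
theorem rep_coe_finset (A : Finset ℕ) (B : Set ℕ) (n : ℕ) :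
    rep A B n = #{a ∈ A | a ≤ n ∧ n - a ∈ B} := by
  have hpairs : {q : ℕ × ℕ | q.1 ∈ (A : Set ℕ) ∧ q.2 ∈ B ∧ q.1 + q.2 = n} =
      (fun a => (a, n - a)) '' ↑{a ∈ A | a ≤ n ∧ n - a ∈ B} := by
    ext ⟨a, b⟩
    simp only [Set.mem_ofPred_eq, Finset.mem_coe, Set.mem_image, Finset.mem_filter, Prod.mk.injEq]
    constructor
    · rintro ⟨ha, hb, rfl⟩
      exact ⟨a, by simpa using ⟨ha, hb⟩⟩
    · rintro ⟨a, ⟨ha, han, hb⟩, rfl, rfl⟩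
      exact ⟨ha, hb, by omega⟩
  rw [rep, hpairs, Set.ncard_image_of_injective _ fun a a' h => (Prod.mk.inj h).1,
    Set.ncard_coe_finset]

theorem existsUnique_of_rep_eq_one {A : Finset ℕ} {B : Set ℕ} {n : ℕ} (hn : ∀ a ∈ A, a ≤ n)
    (h : rep A B n = 1) : ∃! a, a ∈ A ∧ n - a ∈ B := by
  classical
  rw [rep_coe_finset, card_eq_one] at h
  obtain ⟨a, ha⟩ := h
  have hmem : ∀ b, b ∈ A ∧ n - b ∈ B ↔ b = a := fun b => by
    rw [← mem_singleton, ← ha, mem_filter]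
    exact ⟨fun h => ⟨h.1, hn b h.1, h.2⟩, fun h => ⟨h.1, h.2.2⟩⟩
  exact ⟨a, (hmem a).mpr rfl, fun b hb => (hmem b).mp hb⟩

theorem cnt_coe_finset_of_le (A : Finset ℕ) {x : ℕ} (hx : ∀ a ∈ A, a ≤ x) : cnt A x = #A := by
  rw [cnt, Set.inter_eq_left.mpr (show (A : Set ℕ) ⊆ Set.Iic x from hx), Set.ncard_coe_finset]

open scoped Classical in
theorem card_filter_sub_mem_le_cnt (B : Set ℕ) (a x : ℕ) :
    #{n ∈ range (x + 1) | a ≤ n ∧ n - a ∈ B} ≤ cnt B x := by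
  rw [cnt, ← Set.ncard_coe_finset]
  refine Set.ncard_le_ncard_of_injOn (· - a) ?_ ?_ ((Set.finite_Iic x).inter_of_right B)
  · intro n hn
    simp only [coe_filter, mem_range, Set.mem_ofPred_eq] at hn
    exact ⟨hn.2.2, by simp only [Set.mem_Iic]; omega⟩
  · intro n hn n' hn' h
    simp only [coe_filter, mem_range, Set.mem_ofPred_eq] at hn hn'
    simp only at h
    omega

theorem sum_rep_le (A : Finset ℕ) (B : Set ℕ) (x : ℕ) :
    ∑ n ∈ range (x + 1), rep A B n ≤ #A * cnt B x := by
  classical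
  calc ∑ n ∈ range (x + 1), rep A B n
      = ∑ a ∈ A, #{n ∈ range (x + 1) | a ≤ n ∧ n - a ∈ B} := by
        simp only [rep_coe_finset, card_filter]
        exact sum_comm
    _ ≤ ∑ _a ∈ A, cnt B x := sum_le_sum fun a _ => card_filter_sub_mem_le_cnt B a x
    _ = #A * cnt B x := by rw [sum_const, smul_eq_mul]

open scoped Classical in
theorem le_sum_rep (A : Finset ℕ) (B : Set ℕ) {n₀ : ℕ} (x : ℕ)
    (hcompl : ∀ n ≥ n₀, 1 ≤ rep A B n) :
    x + 1 - n₀ + #{n ∈ Ico n₀ (x + 1) | rep A B n ≠ 1} ≤ ∑ n ∈ range (x + 1), rep A B n :=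
  calc x + 1 - n₀ + #{n ∈ Ico n₀ (x + 1) | rep A B n ≠ 1}
      = ∑ n ∈ Ico n₀ (x + 1), (1 + if rep A B n ≠ 1 then 1 else 0) := by
        rw [sum_add_distrib, card_filter, sum_const, Nat.card_Ico, smul_eq_mul, mul_one]
    _ ≤ ∑ n ∈ Ico n₀ (x + 1), rep A B n := by
        refine sum_le_sum fun n hn => ?_
        have := hcompl n (mem_Ico.mp hn).1
        split_ifs <;> omega
    _ ≤ ∑ n ∈ range (x + 1), rep A B n := by
        refine sum_le_sum_of_subset fun n hn => ?_
        simp only [mem_Ico, mem_range] at hn ⊢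
        omega

theorem eventually_rep_eq_one (A : Finset ℕ) (B : Set ℕ)
    (hcompl : ∀ᶠ n in atTop, 1 ≤ rep A B n) (C : ℤ)
    (hC : ∃ᶠ x in atTop, (cnt A x : ℤ) * cnt B x - x ≤ C) :
    ∀ᶠ n in atTop, rep A B n = 1 := by
  classical
  obtain ⟨n₀, hn₀⟩ := eventually_atTop.mp hcompl
  suffices hfin : {n | n₀ ≤ n ∧ rep A B n ≠ 1}.Finite by
    obtain ⟨N, hN⟩ := hfin.bddAbove
    filter_upwards [eventually_ge_atTop (max n₀ (N + 1))] with n hn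
    by_contra hne
    have := hN ⟨le_of_max_le_left hn, hne⟩
    omega
  by_contra hinf
  obtain ⟨T, hT, hTcard⟩ := Set.Infinite.exists_subset_card_eq hinf ((C + n₀).toNat + 1)
  obtain ⟨x, hxC, hx⟩ := (hC.and_eventually
    (eventually_ge_atTop (max (max n₀ (T.sup id)) (A.sup id)))).exists
  have hTbad : #T ≤ #{n ∈ Ico n₀ (x + 1) | rep A B n ≠ 1} := by
    refine card_le_card fun n hn => ?_
    have hnx : n ≤ x := (le_sup (f := id) hn).trans (le_of_max_le_right (le_of_max_le_left hx))
    obtain ⟨hn₀n, hbad⟩ := hT hn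
    simp only [mem_filter, mem_Ico]
    exact ⟨⟨hn₀n, by omega⟩, hbad⟩
  have hcntA : cnt A x = #A :=
    cnt_coe_finset_of_le A fun a ha => (le_sup (f := id) ha).trans (le_of_max_le_right hx)
  have hsum := (le_sum_rep A B x hn₀).trans (sum_rep_le A B x)
  rw [hcntA] at hxC
  have : ((x + 1 - n₀ : ℕ) : ℤ) + #T ≤ #A * cnt B x := by exact_mod_cast by omega
  omega

theorem exists_periodic_of_window_determines (P : ℕ → Prop) (N L : ℕ)
    (hdet : ∀ n n', N ≤ n → N ≤ n' → (∀ i < L, P (n + i) ↔ P (n' + i)) →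
      (P (n + L) ↔ P (n' + L))) :
    ∃ k m, 0 < m ∧ ∀ n ≥ k, (P (n + m) ↔ P n) := by
  obtain ⟨u, v, huv, hwin⟩ :=
    Finite.exists_ne_map_eq_of_infinite fun n (i : Fin L) => P (N + n + i)
  wlog hlt : u < v generalizing u v
  · exact this v u huv.symm hwin.symm (by omega)
  have hagree : ∀ j, P (N + u + j) ↔ P (N + v + j) := by
    intro j
    induction j using Nat.strong_induction_on with
    | _ j ih =>
      rcases lt_or_ge j L with hjL | hLj
      · exact Iff.of_eq (congrFun hwin ⟨j, hjL⟩)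
      · have := hdet (N + u + (j - L)) (N + v + (j - L)) (by omega) (by omega)
          fun i hi => by simpa only [add_assoc] using ih (j - L + i) (by omega)
        simpa only [add_assoc, Nat.sub_add_cancel hLj] using this
  refine ⟨N + u, v - u, by omega, fun n hn => ?_⟩
  have := hagree (n - (N + u))
  rw [show N + u + (n - (N + u)) = n by omega, show N + v + (n - (N + u)) = n + (v - u) by omega]
    at this
  exact this.symm

theorem eventually_periodic_of_existsUnique (A : Finset ℕ) (hA : A.Nonempty) (B : Set ℕ)
    (huniq : ∀ᶠ n in atTop, ∃! a, a ∈ A ∧ n - a ∈ B) :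
    ∃ k m, 0 < m ∧ ∀ n ≥ k, (n + m ∈ B ↔ n ∈ B) := by
  obtain ⟨N, hN⟩ := eventually_atTop.mp huniq
  set a₀ := A.min' hA
  set M := A.max' hA
  -- By uniqueness at `n + M + a₀`, membership of `n + M` is decided by the window `[n, n + M)`.
  have hrec : ∀ n ≥ N, (n + M ∈ B ↔ ∀ a ∈ A, a ≠ a₀ → n + (M + a₀ - a) ∉ B) := by
    intro n hn
    obtain ⟨a, ⟨ha, hab⟩, hunique⟩ := hN (n + M + a₀) (by omega)
    constructor
    · intro hB b hb hba hbB
      have h1 := hunique a₀ ⟨A.min'_mem hA, by simpa using hB⟩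
      have h2 := hunique b ⟨hb, by rwa [show n + M + a₀ - b = n + (M + a₀ - b) by
        have := A.le_max' b hb; omega]⟩
      exact hba (h2.trans h1.symm)
    · intro hall
      by_cases haa : a = a₀
      · simpa [haa] using hab
      · exact absurd (by rwa [show n + M + a₀ - a = n + (M + a₀ - a) by
          have := A.le_max' a ha; omega] at hab) (hall a ha haa)
  refine exists_periodic_of_window_determines (· ∈ B) N M fun n n' hn hn' hwin => ?_
  rw [hrec n hn, hrec n' hn']
  refine forall₂_congr fun a ha => imp_congr_right fun hne => not_congr (hwin _ ?_)
  have := A.min'_lt_of_mem_erase_min' hA (mem_erase.mpr ⟨hne, ha⟩)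
  have := A.le_max' a ha
  omega

open scoped Classical in
theorem mem_iff_mod_mem_of_periodic {B : Set ℕ} {k m : ℕ} (hm : 0 < m)
    (hper : ∀ n ≥ k, (n + m ∈ B ↔ n ∈ B)) :
    ∀ n ≥ m * k, n ∈ B ↔ n % m ∈ {r ∈ range m | m * k + r ∈ B} := by
  have hperiodic : Function.Periodic (fun j => m * k + j ∈ B) m := fun j =>
    propext (by simpa only [add_assoc] using hper (m * k + j) (by nlinarith))
  intro n hn
  have := hperiodic.map_mod_nat (n - m * k)
  rw [Nat.sub_mul_mod hn, Nat.add_sub_cancel' hn] at this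
  simp [Nat.mod_lt n hm, this]

def TilesMod (A S : Finset ℕ) (m : ℕ) : Prop :=
  Set.BijOn (fun x : ℕ × ℕ => (x.1 + x.2) % m) ↑(A ×ˢ S) ↑(range m)

theorem tilesMod_of_eventually {A S : Finset ℕ} {B : Set ℕ} {m : ℕ} (hm : 0 < m)
    (hS : ∀ s ∈ S, s < m) (huniq : ∀ᶠ n in atTop, ∃! a, a ∈ A ∧ n - a ∈ B)
    (hper : ∀ᶠ n in atTop, (n ∈ B ↔ n % m ∈ S)) : TilesMod A S m := by
  obtain ⟨N, hN⟩ := eventually_atTop.mp (huniq.and hper)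
  have hAle : ∀ a ∈ A, a ≤ A.sup id := fun a ha => le_sup (f := id) ha
  have hlarge : ∀ c, ∃ n, N + A.sup id ≤ n ∧ n % m = c % m := fun c =>
    ⟨c % m + (N + A.sup id) * m, (Nat.le_mul_of_pos_right _ hm).trans (Nat.le_add_left _ _),
      by rw [Nat.add_mul_mod_self_right, Nat.mod_mod]⟩
  have hmemB : ∀ n, N + A.sup id ≤ n → ∀ a ∈ A, (n - a ∈ B ↔ (n - a) % m ∈ S) := fun n hn a ha =>
    (hN (n - a) (by have := hAle a ha; omega)).2
  have hsub_mod : ∀ n a s, a ≤ n → s < m → n % m = (a + s) % m → (n - a) % m = s := by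
    intro n a s han hs hn
    rw [← Nat.mod_eq_of_lt hs]
    exact Nat.ModEq.add_left_cancel' a (by rwa [Nat.add_sub_cancel' han])
  refine ⟨fun x _ => mem_coe.mpr (mem_range.mpr (Nat.mod_lt _ hm)), ?_, ?_⟩
  · rintro ⟨a, s⟩ has ⟨a', s'⟩ has' heq
    simp only [coe_product, Set.mem_prod, mem_coe] at has has' heq
    obtain ⟨n, hn, hnmod⟩ := hlarge (a + s)
    have hle : ∀ b ∈ A, b ≤ n := fun b hb => by have := hAle b hb; omega
    have hna : n - a ∈ B :=
      (hmemB n hn a has.1).mpr (hsub_mod n a s (hle a has.1) (hS s has.2) hnmod ▸ has.2)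
    have hna' : n - a' ∈ B := (hmemB n hn a' has'.1).mpr
      (hsub_mod n a' s' (hle a' has'.1) (hS s' has'.2) (hnmod.trans heq) ▸ has'.2)
    have haa' : a = a' := ((hN n (by omega)).1.unique ⟨has.1, hna⟩ ⟨has'.1, hna'⟩)
    subst haa'
    have hss' : s % m = s' % m := Nat.ModEq.add_left_cancel' a heq
    rw [Nat.mod_eq_of_lt (hS s has.2), Nat.mod_eq_of_lt (hS s' has'.2)] at hss'
    rw [hss']
  · intro r hr
    obtain ⟨n, hn, hnmod⟩ := hlarge r
    obtain ⟨a, ⟨ha, hab⟩, -⟩ := (hN n (by omega)).1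
    refine ⟨(a, (n - a) % m), ?_, ?_⟩
    · simp only [coe_product, Set.mem_prod, mem_coe]
      exact ⟨ha, (hmemB n hn a ha).mp hab⟩
    · have han : a ≤ n := by have := hAle a ha; omega
      simp only [Nat.add_mod_mod, Nat.add_sub_cancel' han, hnmod]
      exact Nat.mod_eq_of_lt (mem_range.mp hr)

theorem TilesMod.card_mul_card {A S : Finset ℕ} {m : ℕ} (h : TilesMod A S m) :
    #A * #S = m := by
  rw [← card_product, ← card_range m]
  exact card_nbij _ h.mapsTo h.injOn h.surjOn

theorem TilesMod.sum_pow_mul_sum_pow {A S : Finset ℕ} {m : ℕ} (h : TilesMod A S m)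
    {R : Type*} [CommSemiring R] {ζ : R} (hζ : ζ ^ m = 1) :
    (∑ a ∈ A, ζ ^ a) * (∑ s ∈ S, ζ ^ s) = ∑ n ∈ range m, ζ ^ n := by
  rw [sum_mul_sum, ← sum_product']
  exact sum_nbij _ (fun x hx => h.mapsTo hx) h.injOn h.surjOn fun x _ => by
    rw [← pow_add, ← pow_eq_pow_mod _ hζ]

theorem geom_sum_eq_zero_of_pow_eq_one {R : Type*} [CommRing R] [IsDomain R] {ζ : R} {m : ℕ}
    (hζ : ζ ^ m = 1) (h1 : ζ ≠ 1) : ∑ n ∈ range m, ζ ^ n = 0 :=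
  eq_zero_of_ne_zero_of_mul_left_eq_zero (sub_ne_zero.mpr h1) (by rw [mul_geom_sum, hζ, sub_self])

theorem dvd_card_of_sum_pow_eq_zero (T : Finset ℕ) {q : ℕ} (hq : 0 < q)
    (h : ∀ ζ : ℂ, ζ ^ q = 1 → ζ ≠ 1 → ∑ b ∈ T, ζ ^ b = 0) : q ∣ #T := by
  classical
  have hω := Complex.isPrimitiveRoot_exp q hq.ne'
  set ω := Complex.exp (2 * Real.pi * Complex.I / q)
  have hpow : ∀ i, (ω ^ i) ^ q = 1 := fun i => by
    rw [← pow_mul, mul_comm, pow_mul, hω.pow_eq_one, one_pow]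
  -- Double-count `∑_{i < q} ∑_{b ∈ T} ω^(i b)`.
  have hrow : ∑ i ∈ range q, ∑ b ∈ T, (ω ^ i) ^ b = #T := by
    rw [sum_eq_single_of_mem 0 (mem_range.mpr hq)]
    · simp
    · intro i hi hi0
      refine h _ (hpow i) fun h1 => hi0 ?_
      exact Nat.eq_zero_of_dvd_of_lt ((hω.pow_eq_one_iff_dvd i).mp h1) (mem_range.mp hi)
  have hcol : ∑ i ∈ range q, ∑ b ∈ T, (ω ^ i) ^ b = q * #{b ∈ T | q ∣ b} := by
    rw [sum_comm, card_filter, Nat.cast_sum, mul_sum]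
    refine sum_congr rfl fun b _ => ?_
    simp_rw [← pow_mul, mul_comm _ b, pow_mul]
    split_ifs with hb
    · simp [(hω.pow_eq_one_iff_dvd b).mpr hb]
    · simpa using geom_sum_eq_zero_of_pow_eq_one (hpow b)
        fun h1 => hb ((hω.pow_eq_one_iff_dvd b).mp h1)
  exact ⟨_, by exact_mod_cast hrow.symm.trans hcol⟩

theorem TilesMod.exists_isPrimitiveRoot_sum_pow_eq_zero {p : ℕ} (hp : p.Prime)
    {A S : Finset ℕ} {m : ℕ} (hm : 0 < m) (hcard : #A = p) (h : TilesMod A S m) :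
    ∃ j, ∃ ζ : ℂ, IsPrimitiveRoot ζ (p ^ (j + 1)) ∧ ∑ a ∈ A, ζ ^ a = 0 := by
  have hpm : p * #S = m := hcard ▸ h.card_mul_card
  set t := m.factorization p
  by_contra! hA
  have hS : ∀ ζ : ℂ, ζ ^ p ^ t = 1 → ζ ≠ 1 → ∑ s ∈ S, ζ ^ s = 0 := by
    intro ζ hζq hζ1
    obtain ⟨e, -, he⟩ := (Nat.dvd_prime_pow hp).mp (orderOf_dvd_of_pow_eq_one hζq)
    obtain ⟨j, rfl⟩ : ∃ j, e = j + 1 :=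
      Nat.exists_eq_add_one.mpr (Nat.pos_of_ne_zero fun he0 => hζ1 (by simpa [he0] using he))
    have hζm : ζ ^ m = 1 := by
      obtain ⟨c, hc⟩ := Nat.ordProj_dvd m p
      rw [hc, pow_mul, hζq, one_pow]
    have hprod := h.sum_pow_mul_sum_pow hζm
    rw [geom_sum_eq_zero_of_pow_eq_one hζm hζ1] at hprod
    exact (mul_eq_zero.mp hprod).resolve_left (hA j ζ (he ▸ IsPrimitiveRoot.orderOf ζ))
  have hdvd := dvd_card_of_sum_pow_eq_zero S (pow_pos hp.pos t) hS
  refine Nat.pow_succ_factorization_not_dvd hm.ne' hp ?_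
  calc p ^ (t + 1) = p * p ^ t := pow_succ' p t
    _ ∣ p * #S := mul_dvd_mul_left p hdvd
    _ = m := hpm

theorem coeff_sum_X_pow {ι : Type*} (s : Finset ι) (g : ι → ℕ) (n : ℕ) :
    (∑ i ∈ s, (X : ℤ[X]) ^ g i).coeff n = (s.val.map g).count n := by
  classical
  rw [finsetSum_coeff, Multiset.count_map, ← Finset.filter_val, ← Finset.card_def, card_filter]
  simp [coeff_X_pow]

theorem exists_eq_X_pow_of_coeff_nonneg {u : ℤ[X]} (hu : ∀ n, 0 ≤ u.coeff n)
    (h1 : u.eval 1 = 1) : ∃ r, u = X ^ r := by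
  have hu0 : u ≠ 0 := by rintro rfl; simp at h1
  set d := u.natDegree
  have hsum : u.coeff d + ∑ n ∈ (range (d + 1)).erase d, u.coeff n = 1 := by
    rw [add_sum_erase _ _ (self_mem_range_succ d), ← h1, eval_eq_sum_range]
    simp [d]
  have hlead : u.coeff d ≠ 0 := leadingCoeff_ne_zero.mpr hu0
  have hrest_nonneg := sum_nonneg fun n (_ : n ∈ (range (d + 1)).erase d) => hu n
  have hrest : ∑ n ∈ (range (d + 1)).erase d, u.coeff n = 0 := by
    have := hu d; omega
  refine ⟨d, ext fun n => ?_⟩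
  rw [coeff_X_pow]
  rcases lt_trichotomy n d with hn | rfl | hn
  · rw [if_neg hn.ne, (sum_eq_zero_iff_of_nonneg fun n _ => hu n).mp hrest n
      (mem_erase.mpr ⟨hn.ne, mem_range.mpr (by omega)⟩)]
  · rw [if_pos rfl]; omega
  · rw [if_neg hn.ne', coeff_eq_zero_of_natDegree_lt hn]

theorem cyclotomic_dvd_sum_X_pow_mod {n : ℕ} (hn : 0 < n) (A : Finset ℕ) {ζ : ℂ}
    (hζ : IsPrimitiveRoot ζ n) (hA : ∑ a ∈ A, ζ ^ a = 0) :
    cyclotomic n ℤ ∣ ∑ a ∈ A, X ^ (a % n) := by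
  refine cyclotomic_eq_minpoly hζ hn ▸ minpoly.isIntegrallyClosed_dvd (hζ.isIntegral hn) ?_
  simpa only [map_sum, map_pow, aeval_X, ← pow_eq_pow_mod _ hζ.pow_eq_one] using hA

theorem exists_map_mod_eq_of_sum_pow_eq_zero {p : ℕ} (hp : p.Prime) (A : Finset ℕ)
    (hcard : #A = p) {j : ℕ} {ζ : ℂ} (hζ : IsPrimitiveRoot ζ (p ^ (j + 1)))
    (hA : ∑ a ∈ A, ζ ^ a = 0) :
    ∃ r, A.val.map (· % p ^ (j + 1)) = (range p).val.map (fun i => r + p ^ j * i) := by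
  have : Fact p.Prime := ⟨hp⟩
  have hqP : p ^ (j + 1) = p ^ j * (p - 1) + p ^ j := by
    rw [← Nat.mul_add_one, Nat.sub_add_cancel hp.one_le, pow_succ]
  set q := p ^ (j + 1) with hq_def
  set P := p ^ j with hP_def
  clear_value q P
  have hq : 0 < q := hq_def ▸ pow_pos hp.pos _
  set f : ℤ[X] := ∑ a ∈ A, X ^ (a % q)
  obtain ⟨u, hu⟩ : cyclotomic q ℤ ∣ f := cyclotomic_dvd_sum_X_pow_mod hq A hζ hA
  have hu1 : u.eval 1 = 1 := by
    have h := congrArg (eval 1) hu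
    simp only [f, eval_finsetSum, eval_pow, eval_X, one_pow, sum_const, hcard, nsmul_eq_mul,
      mul_one, eval_mul, hq_def, eval_one_cyclotomic_prime_pow] at h
    exact (mul_eq_left₀ (by exact_mod_cast hp.ne_zero)).mp h.symm
  have hu0 : u ≠ 0 := by rintro rfl; simp at hu1
  have hfdeg : f.natDegree ≤ q - 1 := by
    refine natDegree_le_iff_coeff_eq_zero.mpr fun n hn => ?_
    rw [coeff_sum_X_pow, Nat.cast_eq_zero, Multiset.count_eq_zero]
    simp only [Multiset.mem_map, not_exists, not_and]
    intro a _ ha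
    have := Nat.mod_lt a hq
    omega
  have hudeg : u.natDegree < P := by
    rw [hu, natDegree_mul (cyclotomic_ne_zero q ℤ) hu0, natDegree_cyclotomic,
      hq_def, Nat.totient_prime_pow_succ hp, ← hP_def, ← hq_def] at hfdeg
    omega
  -- `Φ_q = 1 + X^P (1 + X^P + ⋯)`, so `f` and `u` agree below degree `P`.
  have hΦ : cyclotomic q ℤ = X ^ P * ∑ i ∈ range (p - 1), (X ^ P) ^ i + 1 := by
    rw [hq_def, hP_def, cyclotomic_prime_pow_eq_geom_sum hp, ← geom_sum_succ,
      Nat.sub_add_cancel hp.one_le]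
  have hlow : ∀ n < P, f.coeff n = u.coeff n := by
    intro n hn
    rw [hu, hΦ, add_mul, one_mul, mul_assoc, coeff_add, coeff_X_pow_mul', if_neg (by omega),
      zero_add]
  obtain ⟨r, rfl⟩ := exists_eq_X_pow_of_coeff_nonneg (fun n => by
    rcases lt_or_ge n P with hn | hn
    · rw [← hlow n hn, coeff_sum_X_pow]; positivity
    · rw [coeff_eq_zero_of_natDegree_lt (by omega)]) hu1
  have hf : f = ∑ i ∈ range p, X ^ (r + P * i) := by
    rw [hu, hq_def, hP_def, cyclotomic_prime_pow_eq_geom_sum hp, sum_mul]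
    refine sum_congr rfl fun i _ => by ring
  refine ⟨r, Multiset.ext.mpr fun n => ?_⟩
  have hcoeff := congrArg (coeff · n) hf
  simp only [f, coeff_sum_X_pow, Nat.cast_inj] at hcoeff
  exact hcoeff

theorem exists_image_eq_of_map_mod_eq {p s r : ℕ} (hp : 0 < p) (A : Finset ℕ)
    (h : A.val.map (· % p ^ (s + 1)) = (range p).val.map (fun i => r + p ^ s * i)) :
    ∃ k : Fin p → ℤ, A.image (fun x : ℕ => (x : ℤ)) =
      univ.image (fun i : Fin p => (r : ℤ) + (i : ℤ) * p ^ s + k i * p ^ (s + 1)) := by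
  have hinj : Set.InjOn (· % p ^ (s + 1)) A := by
    refine (Multiset.nodup_map_iff_inj_on A.nodup).mp (h ▸ (range p).nodup.map fun i i' hi => ?_)
    simpa [hp.ne'] using hi
  have hval : ∀ b i, b % p ^ (s + 1) = r + p ^ s * i →
      (b : ℤ) = r + i * p ^ s + (b / p ^ (s + 1) : ℕ) * p ^ (s + 1) := by
    intro b i hb
    have hdecomp := Nat.mod_add_div b (p ^ (s + 1))
    generalize b / p ^ (s + 1) = k at hdecomp ⊢
    rw [← hdecomp, hb]
    push_cast
    ring
  have hmem : ∀ i : Fin p, ∃ a ∈ A, a % p ^ (s + 1) = r + p ^ s * i := fun i => by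
    have := Multiset.mem_map_of_mem (fun i => r + p ^ s * i) (mem_val.mpr (mem_range.mpr i.2))
    rw [← h] at this
    simpa using this
  choose a ha hamod using hmem
  refine ⟨fun i => (a i / p ^ (s + 1) : ℕ), ?_⟩
  ext z
  simp only [mem_image, mem_univ, true_and]
  constructor
  · rintro ⟨b, hb, rfl⟩
    obtain ⟨i, hi, hbi⟩ : ∃ i < p, r + p ^ s * i = b % p ^ (s + 1) := by
      have := Multiset.mem_map_of_mem (· % p ^ (s + 1)) hb
      rw [h] at this
      simpa using this
    have hab : a ⟨i, hi⟩ = b := hinj (ha _) hb ((hamod _).trans hbi)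
    exact ⟨⟨i, hi⟩, by rw [hab, hval b i hbi.symm]⟩
  · rintro ⟨i, rfl⟩
    exact ⟨a i, ha i, hval _ _ (hamod i)⟩

theorem stmt6 (p : ℕ) (hp : p.Prime) (A : Finset ℕ) (hcard : A.card = p)
    (B : Set ℕ)
    (hcompl : ∃ n₀ : ℕ, ∀ n ≥ n₀, 1 ≤ rep (↑A) B n)
    (hliminf : ∃ C : ℤ, ∀ N : ℕ, ∃ x ≥ N,
      (cnt (↑A) x : ℤ) * (cnt B x : ℤ) - (x : ℤ) ≤ C) :
    ∃ (a : ℤ), 0 ≤ a ∧ ∃ (s : ℕ) (k : Fin p → ℤ),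
      Finset.image (fun x : ℕ => (x : ℤ)) A =
        Finset.image (fun i : Fin p => a + (i : ℤ) * p ^ s + k i * p ^ (s + 1))
          Finset.univ := by
  obtain ⟨C, hC⟩ := hliminf
  have huniq : ∀ᶠ n in atTop, ∃! a, a ∈ A ∧ n - a ∈ B := by
    filter_upwards [eventually_rep_eq_one A B (eventually_atTop.mpr hcompl) C
      (frequently_atTop.mpr hC), eventually_ge_atTop (A.sup id)] with n hrep hn
    exact existsUnique_of_rep_eq_one (fun a ha => (le_sup (f := id) ha).trans hn) hrep
  obtain ⟨k, m, hm, hper⟩ :=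
    eventually_periodic_of_existsUnique A (card_pos.mp (hcard ▸ hp.pos)) B huniq
  classical
  have htiles : TilesMod A {r ∈ range m | m * k + r ∈ B} m :=
    tilesMod_of_eventually hm (fun s hs => mem_range.mp (mem_filter.mp hs).1) huniq
      (eventually_atTop.mpr ⟨m * k, mem_iff_mod_mem_of_periodic hm hper⟩)
  obtain ⟨j, ζ, hζ, hAζ⟩ := htiles.exists_isPrimitiveRoot_sum_pow_eq_zero hp hm hcard
  obtain ⟨r, hr⟩ := exists_map_mod_eq_of_sum_pow_eq_zero hp A hcard hζ hAζ
  exact ⟨r, r.cast_nonneg, j, exists_image_eq_of_map_mod_eq hp.pos A hr⟩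
end

section
/- Let p be a prime and A a set of p nonnegative integers that is NOT of the form {a + i·p^s + k_i·p^{s+1} : i = 0, ..., p−1} for any integers a ≥ 0, s ≥ 0, k_i. Then for every additive complement B of A, lim_{x→∞}(A(x)B(x) − x) = +∞. -/
/-!
If `A(x)B(x) - x` stays bounded along a sequence, then, since `∑_{n ≤ x} rep n ≤ A(x)B(x)`, every
large `n` has exactly one representation: `A ⊕ B` tiles a tail of `ℕ`. Such a tiling is eventually
periodic with some period `T`, so a window `W` of `B` satisfies `A ⊕ W = ℤ/Tℤ`; hence
`p * #W = T` and `A(ζ) W(ζ) = 0` for every `T`-th root of unity `ζ ≠ 1`, where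
`S(ζ) = ∑_{s ∈ S} ζ^s`.

Divisibility of `∑_{s ∈ S} X^(s % p^(k+1))` by the cyclotomic polynomial `Φ_{p^(k+1)}` makes its
coefficients `p^k`-periodic, so `S(ζ) = 0` for a primitive `p^(k+1)`-th root `ζ` means that each
class of `S` modulo `p^k` splits evenly into `p` classes modulo `p^(k+1)`. If `A(ζ) ≠ 0` for all
primitive `p^(k+1)`-th roots with `p^(k+1) ∣ T`, then `W` vanishes there and `p^(v_p T) ∣ #W`,
contradicting `p * #W = T`. For `#A = p`, even splitting at one level is exactly the standard form.
-/

open Finset Filter Polynomial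

lemma cnt_eq_card (S : Set ℕ) [DecidablePred (· ∈ S)] (x : ℕ) :
    cnt S x = ((Iic x).filter (· ∈ S)).card := by
  rw [cnt, ← Set.ncard_coe_finset]
  congr 1
  ext
  simp [and_comm]

lemma rep_eq_card_filter_product (A B : Set ℕ) [DecidablePred (· ∈ A)] [DecidablePred (· ∈ B)]
    {x n : ℕ} (hn : n ≤ x) :
    rep A B n = ((((Iic x).filter (· ∈ A)) ×ˢ ((Iic x).filter (· ∈ B))).filter
      (fun q => q.1 + q.2 = n)).card := by
  rw [rep, ← Set.ncard_coe_finset]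
  congr 1
  ext ⟨a, b⟩
  simp only [Set.mem_ofPred_eq, coe_filter, mem_product, mem_filter, mem_Iic]
  constructor
  · rintro ⟨ha, hb, rfl⟩
    exact ⟨⟨⟨by omega, ha⟩, by omega, hb⟩, rfl⟩
  · rintro ⟨⟨⟨-, ha⟩, -, hb⟩, rfl⟩
    exact ⟨ha, hb, rfl⟩

lemma rep_coe_eq_card_filter (A : Finset ℕ) (B : Set ℕ) [DecidablePred (· ∈ B)] {n : ℕ}
    (hn : ∀ a ∈ A, a ≤ n) : rep ↑A B n = (A.filter (fun a => n - a ∈ B)).card := by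
  have : {q : ℕ × ℕ | q.1 ∈ (A : Set ℕ) ∧ q.2 ∈ B ∧ q.1 + q.2 = n} =
      (fun a => (a, n - a)) '' ↑(A.filter (fun a => n - a ∈ B)) := by
    ext ⟨a, b⟩
    simp only [Set.mem_ofPred_eq, coe_filter, Set.mem_image, Prod.mk.injEq, mem_coe]
    constructor
    · rintro ⟨ha, hb, rfl⟩
      exact ⟨a, ⟨ha, by simpa using hb⟩, rfl, by simp⟩
    · rintro ⟨a, ⟨ha, hb⟩, rfl, rfl⟩
      exact ⟨ha, hb, by have := hn a ha; omega⟩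
  rw [rep, this, Set.ncard_image_of_injective _ fun x y h => congrArg Prod.fst h,
    Set.ncard_coe_finset]

lemma sum_rep_le_cnt_mul_cnt (A B : Set ℕ) (x : ℕ) :
    ∑ n ∈ range (x + 1), rep A B n ≤ cnt A x * cnt B x := by
  classical
  set F := ((Iic x).filter (· ∈ A)) ×ˢ ((Iic x).filter (· ∈ B))
  calc ∑ n ∈ range (x + 1), rep A B n
      = ∑ n ∈ range (x + 1), (F.filter (fun q => q.1 + q.2 = n)).card :=
        sum_congr rfl fun n hn => rep_eq_card_filter_product A B (by simpa [Nat.lt_succ_iff] using hn)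
    _ = (F.filter (fun q => q.1 + q.2 ∈ range (x + 1))).card :=
        sum_card_fiberwise_eq_card_filter _ _ _
    _ ≤ F.card := card_filter_le _ _
    _ = cnt A x * cnt B x := by rw [card_product, cnt_eq_card, cnt_eq_card]

lemma tendsto_cnt_mul_cnt_sub_of_frequently {A B : Set ℕ} {n₀ : ℕ}
    (hrep : ∀ n ≥ n₀, 1 ≤ rep A B n) (hfreq : ∃ᶠ n in atTop, rep A B n ≠ 1) :
    Tendsto (fun x : ℕ => (cnt A x : ℤ) * cnt B x - x) atTop atTop := by
  classical
  set P : ℕ → Prop := fun n => n₀ ≤ n ∧ rep A B n ≠ 1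
  have hP : {n | P n}.Infinite := Nat.frequently_atTop_iff_infinite.mp <|
    (hfreq.and_eventually (eventually_ge_atTop n₀)).mono fun n h => ⟨h.2, h.1⟩
  have hcount : Tendsto (fun x => Nat.count P (x + 1)) atTop atTop :=
    tendsto_atTop_atTop_of_monotone (fun a b h => Nat.count_monotone P (by omega)) fun b =>
      ⟨Nat.nth P b, (Nat.count_nth_of_infinite (p := P) hP b).ge.trans
        (Nat.count_monotone P (by omega))⟩
  refine tendsto_atTop_mono (fun x => ?_) <|
    tendsto_atTop_add_const_right _ (1 - n₀ : ℤ) (tendsto_natCast_atTop_atTop.comp hcount)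
  -- each `n ≥ n₀` is represented at least once, and at least twice when `P n`
  have hpoint : ∀ n ∈ range (x + 1),
      1 + (if P n then 1 else 0) ≤ rep A B n + if n < n₀ then 1 else 0 := by
    intro n _
    by_cases hn : n < n₀
    · simp [P, hn, show ¬ n₀ ≤ n by omega]
    · have := hrep n (by omega)
      simp only [P, hn, if_false]
      split_ifs with h <;> omega
  have key : x + 1 + Nat.count P (x + 1) ≤ cnt A x * cnt B x + n₀ := by
    have hsum := sum_le_sum hpoint
    rw [sum_add_distrib, sum_add_distrib, sum_const, card_range, smul_eq_mul, mul_one,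
      sum_boole, sum_boole, ← Nat.count_eq_card_filter_range] at hsum
    have hsmall : ((range (x + 1)).filter (· < n₀)).card ≤ n₀ :=
      (card_le_card fun n hn => by simp at hn ⊢; omega).trans (card_range n₀).le
    have := sum_rep_le_cnt_mul_cnt A B x
    push_cast at hsum
    omega
  zify at key
  simp only [Function.comp_apply]
  linarith

lemma iff_of_card_filter_eq_one {α : Type*} {s : Finset α} {P Q : α → Prop} [DecidablePred P]
    [DecidablePred Q] (hP : (s.filter P).card = 1) (hQ : (s.filter Q).card = 1) {x : α}
    (hx : x ∈ s) (hPQ : ∀ y ∈ s, y ≠ x → (P y ↔ Q y)) : P x ↔ Q x := by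
  obtain ⟨u, hu⟩ := card_eq_one.mp hP
  obtain ⟨v, hv⟩ := card_eq_one.mp hQ
  have mem_P : ∀ y ∈ s, P y → y = u := fun y hy h => by
    simpa [hu] using (mem_filter.mpr ⟨hy, h⟩ : y ∈ s.filter P)
  have mem_Q : ∀ y ∈ s, Q y → y = v := fun y hy h => by
    simpa [hv] using (mem_filter.mpr ⟨hy, h⟩ : y ∈ s.filter Q)
  have hu' : u ∈ s.filter P := by simp [hu]
  have hv' : v ∈ s.filter Q := by simp [hv]
  rw [mem_filter] at hu' hv'
  constructor
  · intro h
    by_contra h'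
    have hvx : v ≠ x := fun e => h' (e ▸ hv'.2)
    exact hvx ((mem_P v hv'.1 ((hPQ v hv'.1 hvx).mpr hv'.2)).trans (mem_P x hx h).symm)
  · intro h
    by_contra h'
    have hux : u ≠ x := fun e => h' (e ▸ hu'.2)
    exact hux ((mem_Q u hu'.1 ((hPQ u hu'.1 hux).mp hu'.2)).trans (mem_Q x hx h).symm)

lemma sum_range_add_eq_of_periodic {M : Type*} [AddCommMonoid M] {u : ℕ → M} {T m₀ : ℕ}
    (hu : ∀ m ≥ m₀, u (m + T) = u m) {y : ℕ} (hy : m₀ ≤ y) :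
    ∑ i ∈ range T, u (y + i) = ∑ i ∈ range T, u (m₀ + i) := by
  induction y, hy using Nat.le_induction with
  | base => rfl
  | succ y hy ih =>
    rw [← ih]
    cases T with
    | zero => simp
    | succ T =>
      rw [sum_range_succ, sum_range_succ', add_zero]
      congr 1
      · exact sum_congr rfl fun i _ => by rw [add_right_comm, add_assoc]
      · rw [show y + 1 + T = y + (T + 1) by omega, hu y hy]

lemma exists_eventually_periodic_of_tiles {A : Finset ℕ} {B : Set ℕ} [DecidablePred (· ∈ B)] {N : ℕ}
    (hAN : ∀ a ∈ A, a ≤ N) (htile : ∀ n ≥ N, (A.filter (fun a => n - a ∈ B)).card = 1) :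
    ∃ T ≥ 1, ∃ M, ∀ m ≥ M, (m + T ∈ B ↔ m ∈ B) := by
  have hA : A.Nonempty :=
    (card_pos.mp (by rw [htile N le_rfl]; exact one_pos)).mono (filter_subset _ _)
  set a₀ := A.min' hA
  -- Pigeonhole on the windows of length `N`: by tiling, each window determines the next one.
  obtain ⟨q₁, q₂, hlt, hwin⟩ : ∃ q₁ q₂, q₁ < q₂ ∧
      (fun i : Fin N => N + q₁ + i ∈ B) = fun i : Fin N => N + q₂ + i ∈ B := by
    obtain ⟨q₁, q₂, hne, h⟩ :=
      Finite.exists_ne_map_eq_of_infinite fun (q : ℕ) (i : Fin N) => N + q + i ∈ B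
    rcases hne.lt_or_gt with hlt | hlt
    exacts [⟨q₁, q₂, hlt, h⟩, ⟨q₂, q₁, hlt, h.symm⟩]
  refine ⟨q₂ - q₁, by omega, N + q₁, fun m hm => ?_⟩
  induction m using Nat.strong_induction_on with
  | _ m ih =>
  by_cases hm' : m < N + q₁ + N
  · have h := congrFun hwin ⟨m - (N + q₁), by omega⟩
    simp only [eq_iff_iff, show N + q₁ + (m - (N + q₁)) = m by omega,
      show N + q₂ + (m - (N + q₁)) = m + (q₂ - q₁) by omega] at h
    exact h.symm
  · have key := iff_of_card_filter_eq_one (htile (m + a₀) (by omega))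
      (htile (m + (q₂ - q₁) + a₀) (by omega)) (A.min'_mem hA) fun a ha hne => ?_
    · rwa [Nat.add_sub_cancel, Nat.add_sub_cancel, Iff.comm] at key
    have ha₀ : a₀ < a := lt_of_le_of_ne (A.min'_le a ha) (Ne.symm hne)
    have haN := hAN a ha
    rw [show m + (q₂ - q₁) + a₀ - a = m + a₀ - a + (q₂ - q₁) by omega]
    exact (ih _ (by omega) (by omega)).symm

lemma sum_pow_mul_sum_pow_eq_of_tiles {R : Type*} [CommSemiring R] {A : Finset ℕ} {B : Set ℕ}
    [DecidablePred (· ∈ B)] {N M T : ℕ} (hAN : ∀ a ∈ A, a ≤ N)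
    (htile : ∀ n ≥ N, (A.filter (fun a => n - a ∈ B)).card = 1)
    (hper : ∀ m ≥ M, (m + T ∈ B ↔ m ∈ B)) {ζ : R} (hζ : ζ ^ T = 1) :
    (∑ a ∈ A, ζ ^ a) * ∑ w ∈ (Ico M (M + T)).filter (· ∈ B), ζ ^ w =
      ∑ i ∈ range T, ζ ^ (M + N + i) := by
  set u : ℕ → R := fun m => if m ∈ B then ζ ^ m else 0
  have hu : ∀ m ≥ M, u (m + T) = u m := fun m hm => by
    simp only [u, hper m hm, pow_add, hζ, mul_one]
  have hW : ∑ w ∈ (Ico M (M + T)).filter (· ∈ B), ζ ^ w = ∑ i ∈ range T, u (M + i) := by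
    rw [sum_filter, sum_Ico_eq_sum_range, Nat.add_sub_cancel_left]
  symm
  calc ∑ i ∈ range T, ζ ^ (M + N + i)
      = ∑ i ∈ range T, ∑ a ∈ A, if M + N + i - a ∈ B then ζ ^ (M + N + i) else 0 := by
        refine sum_congr rfl fun i _ => ?_
        rw [← sum_filter, sum_const, htile _ (by omega), one_smul]
    _ = ∑ a ∈ A, ζ ^ a * ∑ i ∈ range T, u (M + N - a + i) := by
        rw [sum_comm]
        refine sum_congr rfl fun a ha => ?_
        rw [mul_sum]
        refine sum_congr rfl fun i _ => ?_
        have := hAN a ha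
        simp only [u, mul_ite, mul_zero, ← pow_add, show M + N + i - a = M + N - a + i by omega,
          show a + (M + N - a + i) = M + N + i by omega]
    _ = (∑ a ∈ A, ζ ^ a) * ∑ w ∈ (Ico M (M + T)).filter (· ∈ B), ζ ^ w := by
        rw [hW, sum_mul]
        refine sum_congr rfl fun a ha => ?_
        rw [sum_range_add_eq_of_periodic hu (by have := hAN a ha; omega)]

lemma cyclotomic_dvd_of_aeval_eq_zero {K : Type*} [Field K] [CharZero K] {n : ℕ} (hn : 0 < n)
    {ζ : K} (hζ : IsPrimitiveRoot ζ n) {P : ℤ[X]} (hP : aeval ζ P = 0) :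
    cyclotomic n ℤ ∣ P := by
  rw [cyclotomic_eq_minpoly hζ hn]
  exact minpoly.isIntegrallyClosed_dvd (hζ.isIntegral hn) hP

-- Compare coefficients in `(X ^ p ^ k - 1) * P = (X ^ p ^ (k + 1) - 1) * H`, where
-- `P = cyclotomic (p ^ (k + 1)) * H` forces `natDegree H < p ^ k`.
lemma coeff_add_prime_pow_of_cyclotomic_dvd {R : Type*} [CommRing R] [Nontrivial R] {p k : ℕ}
    (hp : p.Prime) {P : R[X]} (hdvd : cyclotomic (p ^ (k + 1)) R ∣ P)
    (hdeg : P.natDegree < p ^ (k + 1)) {j : ℕ} (hj : j + p ^ k < p ^ (k + 1)) :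
    P.coeff (j + p ^ k) = P.coeff j := by
  have := Fact.mk hp
  obtain ⟨H, rfl⟩ := hdvd
  have hH : H.coeff (j + p ^ k) = 0 := by
    rcases eq_or_ne H 0 with rfl | hH0
    · simp
    rw [(cyclotomic.monic _ R).natDegree_mul' hH0, natDegree_cyclotomic,
      Nat.totient_prime_pow_succ hp, pow_succ, Nat.mul_sub_one] at hdeg
    have : p ^ k ≤ p ^ k * p := Nat.le_mul_of_pos_right _ hp.pos
    exact H.coeff_eq_zero_of_natDegree_lt (by omega)
  have e : (X ^ p ^ k - 1) * (cyclotomic (p ^ (k + 1)) R * H) = (X ^ p ^ (k + 1) - 1) * H := by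
    rw [← mul_assoc, mul_comm (X ^ p ^ k - 1), cyclotomic_prime_pow_mul_X_pow_sub_one]
  have := congrArg (coeff · (j + p ^ k)) e
  simp only [sub_mul, one_mul, coeff_sub, coeff_X_pow_mul', if_pos (Nat.le_add_left _ j),
    if_neg (show ¬ p ^ (k + 1) ≤ j + p ^ k by omega), Nat.add_sub_cancel, hH, sub_zero] at this
  exact (sub_eq_zero.mp this).symm

lemma card_filter_mod_eq_sum {S : Finset ℕ} {m p : ℕ} (hm : 0 < m) (hp : 0 < p) {r : ℕ}
    (hr : r < m) :
    (S.filter (· % m = r)).card = ∑ i ∈ range p, (S.filter (· % (m * p) = r + m * i)).card := by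
  rw [card_eq_sum_card_fiberwise (f := fun s => s / m % p) (t := range p)
    fun s _ => mem_range.mpr (Nat.mod_lt _ hp)]
  refine sum_congr rfl fun i _ => ?_
  rw [filter_filter]
  refine congrArg card (filter_congr fun s _ => ?_)
  rw [← Nat.mod_mul_right_div_self, ← Nat.mod_mul_right_mod s m p, and_comm,
    Nat.div_mod_unique hm, eq_comm]
  exact and_iff_left hr

lemma card_filter_modEq_eq_mul {K : Type*} [Field K] [CharZero K] {p k : ℕ} (hp : p.Prime)
    {ζ : K} (hζ : IsPrimitiveRoot ζ (p ^ (k + 1))) {S : Finset ℕ} (hS : ∑ s ∈ S, ζ ^ s = 0)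
    (r : ℕ) :
    (S.filter (· ≡ r [MOD p ^ k])).card = p * (S.filter (· ≡ r [MOD p ^ (k + 1)])).card := by
  rw [pow_succ] at hζ ⊢
  set m := p ^ k
  have hm : 0 < m := pow_pos hp.pos k
  have hn0 : 0 < m * p := Nat.mul_pos hm hp.pos
  set c : ℕ → ℕ := fun j => (S.filter (· % (m * p) = j)).card
  set P : ℤ[X] := ∑ s ∈ S, X ^ (s % (m * p))
  have hcoeff : ∀ j, P.coeff j = c j := fun j => by
    simp [P, c, finsetSum_coeff, coeff_X_pow, sum_boole, eq_comm]
  have hdvd : cyclotomic (m * p) ℤ ∣ P := by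
    refine cyclotomic_dvd_of_aeval_eq_zero hn0 hζ ?_
    have hpow : ∀ s, ζ ^ (s % (m * p)) = ζ ^ s := fun s => by
      rw [hζ.eq_orderOf, pow_mod_orderOf]
    simpa only [P, map_sum, map_pow, aeval_X, hpow] using hS
  have hdeg : P.natDegree < m * p := by
    have : P.natDegree ≤ m * p - 1 := natDegree_sum_le_of_forall_le _ _
      fun s _ => (natDegree_X_pow_le _).trans (by have := Nat.mod_lt s hn0; omega)
    omega
  have hper : ∀ j, j + m < m * p → c (j + m) = c j := fun j hj => by
    rw [← pow_succ] at hdvd hdeg hj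
    have := coeff_add_prime_pow_of_cyclotomic_dvd hp hdvd hdeg hj
    rwa [hcoeff, hcoeff, Nat.cast_inj] at this
  have hconst : ∀ i < p, c (r % m + m * i) = c (r % m) := by
    intro i hi
    induction i with
    | zero => simp
    | succ i ih =>
      have : m * i + m + m ≤ m * p := by
        rw [← mul_add_one, ← mul_add_one]; exact Nat.mul_le_mul_left m hi
      rw [mul_add_one, ← add_assoc, hper _ (by have := Nat.mod_lt r hm; omega), ih (by omega)]
  calc (S.filter (· ≡ r [MOD m])).card = ∑ i ∈ range p, c (r % m + m * i) :=
        card_filter_mod_eq_sum hm hp.pos (Nat.mod_lt r hm)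
    _ = p * c (r % m) := by
        rw [sum_congr rfl fun i hi => hconst i (mem_range.mp hi), sum_const, card_range,
          smul_eq_mul]
    _ = p * (S.filter (· ≡ r [MOD m * p])).card := by
        rw [← hconst (r / m % p) (Nat.mod_lt _ hp.pos), ← pow_succ, ← Nat.mod_pow_succ]
        rfl

lemma pow_dvd_card_of_sum_pow_eq_zero {K : Type*} [Field K] [CharZero K] {p : ℕ} (hp : p.Prime)
    {S : Finset ℕ} {e : ℕ}
    (hS : ∀ k < e, ∃ ζ : K, IsPrimitiveRoot ζ (p ^ (k + 1)) ∧ ∑ s ∈ S, ζ ^ s = 0) :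
    p ^ e ∣ S.card := by
  suffices ∀ k ≤ e, S.card = p ^ k * (S.filter (· ≡ 0 [MOD p ^ k])).card from
    Dvd.intro _ (this e le_rfl).symm
  intro k hk
  induction k with
  | zero => simp [Nat.modEq_one]
  | succ k ih =>
    obtain ⟨ζ, hζ, hζS⟩ := hS k hk
    rw [ih (by omega), card_filter_modEq_eq_mul hp hζ hζS, pow_succ, mul_assoc]

def IsStandardPrimeTile (p : ℕ) (A : Finset ℕ) : Prop :=
  ∃ (a : ℤ), 0 ≤ a ∧ ∃ (s : ℕ) (k : Fin p → ℤ),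
    Finset.image (fun x : ℕ => (x : ℤ)) A =
      Finset.image (fun i : Fin p => a + (i : ℤ) * p ^ s + k i * p ^ (s + 1)) Finset.univ

lemma isStandardPrimeTile_of_sum_pow_eq_zero {K : Type*} [Field K] [CharZero K] {p s : ℕ}
    (hp : p.Prime) {A : Finset ℕ} (hcard : A.card = p) {ζ : K}
    (hζ : IsPrimitiveRoot ζ (p ^ (s + 1))) (hA : ∑ a ∈ A, ζ ^ a = 0) :
    IsStandardPrimeTile p A := by
  have hcount := card_filter_modEq_eq_mul hp hζ hA
  -- `p * (size of a class mod p ^ (s + 1)) ≤ #A = p` forces the class sizes below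
  have hclass : ∀ b ∈ A, A.filter (· ≡ b [MOD p ^ s]) = A ∧
      (A.filter (· ≡ b [MOD p ^ (s + 1)])).card = 1 := by
    intro b hb
    have hle : (A.filter (· ≡ b [MOD p ^ s])).card ≤ p := hcard ▸ card_filter_le _ _
    have hpos : 0 < (A.filter (· ≡ b [MOD p ^ (s + 1)])).card :=
      card_pos.mpr ⟨b, mem_filter.mpr ⟨hb, rfl⟩⟩
    rw [hcount] at hle
    have hone : (A.filter (· ≡ b [MOD p ^ (s + 1)])).card = 1 :=
      le_antisymm (le_of_mul_le_mul_left (by omega) hp.pos) hpos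
    refine ⟨eq_of_subset_of_card_le (filter_subset _ _) ?_, hone⟩
    rw [hcount, hone, hcard, mul_one]
  obtain ⟨a₀, ha₀⟩ : A.Nonempty := card_pos.mp (hcard ▸ hp.pos)
  set ι : ℕ → Fin p := fun a => ⟨a / p ^ s % p, Nat.mod_lt _ hp.pos⟩
  have hmod : ∀ a ∈ A, a % p ^ s = a₀ % p ^ s := fun a ha => by
    have := (hclass a₀ ha₀).1 ▸ ha
    exact (mem_filter.mp this).2
  have hinj : Set.InjOn ι A := by
    intro a ha b hb hab
    have hab' : a ≡ b [MOD p ^ (s + 1)] := by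
      rw [Fin.mk.injEq] at hab
      rw [Nat.ModEq, Nat.mod_pow_succ, Nat.mod_pow_succ, hmod a ha, hmod b hb, hab]
    exact card_le_one.mp (hclass b hb).2.le a (mem_filter.mpr ⟨ha, hab'⟩) b
      (mem_filter.mpr ⟨hb, rfl⟩)
  have himage : A.image ι = univ :=
    eq_univ_of_card _ (by rw [card_image_of_injOn hinj, hcard, Fintype.card_fin])
  have hdigits : ∀ a ∈ A, (a : ℤ) = ((a₀ % p ^ s : ℕ) : ℤ) + ((ι a : ℕ) : ℤ) * p ^ s +
      ((a / p ^ (s + 1) : ℕ) : ℤ) * p ^ (s + 1) := by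
    intro a ha
    have h := Nat.mod_add_div a (p ^ (s + 1))
    rw [Nat.mod_pow_succ, hmod a ha] at h
    have : a = a₀ % p ^ s + (a / p ^ s % p) * p ^ s + (a / p ^ (s + 1)) * p ^ (s + 1) := by
      linarith
    exact_mod_cast this
  refine ⟨((a₀ % p ^ s : ℕ) : ℤ), by positivity, s,
    fun i => ((Function.invFunOn ι A i / p ^ (s + 1) : ℕ) : ℤ), ?_⟩
  rw [← himage, image_image]
  refine image_congr fun a ha => ?_
  simp only [Function.comp_apply, hinj.leftInvOn_invFunOn ha]
  exact hdigits a ha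

lemma exists_isPrimitiveRoot_sum_pow_eq_zero {p : ℕ} (hp : p.Prime) {A W : Finset ℕ} {T : ℕ}
    (hT : A.card * W.card = T) (hT0 : T ≠ 0) (hpA : p ∣ A.card)
    (hAW : ∀ ζ : ℂ, ζ ^ T = 1 → ζ ≠ 1 → (∑ a ∈ A, ζ ^ a) * ∑ w ∈ W, ζ ^ w = 0) :
    ∃ s, ∃ ζ : ℂ, IsPrimitiveRoot ζ (p ^ (s + 1)) ∧ ∑ a ∈ A, ζ ^ a = 0 := by
  by_contra! hA
  have hW : p ^ T.factorization p ∣ W.card := pow_dvd_card_of_sum_pow_eq_zero hp fun k hk => by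
    have hζ := Complex.isPrimitiveRoot_exp _ (pow_ne_zero (k + 1) hp.ne_zero)
    refine ⟨_, hζ, ?_⟩
    have hζT := (hζ.pow_eq_one_iff_dvd T).mpr ((pow_dvd_pow p hk).trans (Nat.ordProj_dvd T p))
    have hζ1 := hζ.ne_one (Nat.one_lt_pow (by omega) hp.one_lt)
    exact (mul_eq_zero.mp (hAW _ hζT hζ1)).resolve_left (hA k _ hζ)
  have := mul_dvd_mul hpA hW
  rw [← pow_succ', hT] at this
  exact Nat.pow_succ_factorization_not_dvd hT0 hp this

lemma isStandardPrimeTile_of_rep_eq_one {p : ℕ} (hp : p.Prime) {A : Finset ℕ} (hcard : A.card = p)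
    {B : Set ℕ} {N : ℕ} (hN : ∀ n ≥ N, rep ↑A B n = 1) : IsStandardPrimeTile p A := by
  have : DecidablePred (· ∈ B) := Classical.decPred _
  have hAN : ∀ a ∈ A, a ≤ N + A.sup id := fun a ha => (le_sup (f := id) ha).trans le_add_self
  have htile : ∀ n ≥ N + A.sup id, (A.filter (fun a => n - a ∈ B)).card = 1 := fun n hn => by
    rw [← rep_coe_eq_card_filter A B fun a ha => (hAN a ha).trans hn, hN n (by omega)]
  obtain ⟨T, hT, M, hper⟩ := exists_eventually_periodic_of_tiles hAN htile
  have hAW : A.card * ((Ico M (M + T)).filter (· ∈ B)).card = T := by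
    simpa using sum_pow_mul_sum_pow_eq_of_tiles hAN htile hper (one_pow (M := ℕ) T)
  obtain ⟨s, ζ, hζ, hA⟩ := exists_isPrimitiveRoot_sum_pow_eq_zero hp hAW (by omega)
    (hcard ▸ dvd_rfl) fun ζ hζT hζ1 => by
      rw [sum_pow_mul_sum_pow_eq_of_tiles hAN htile hper hζT]
      simp_rw [pow_add ζ (M + _), ← mul_sum, geom_sum_eq hζ1, hζT, sub_self, zero_div, mul_zero]
  exact isStandardPrimeTile_of_sum_pow_eq_zero hp hcard hζ hA

theorem stmt7 (p : ℕ) (hp : p.Prime) (A : Finset ℕ) (hcard : A.card = p)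
    (hform : ¬ ∃ (a : ℤ), 0 ≤ a ∧ ∃ (s : ℕ) (k : Fin p → ℤ),
      Finset.image (fun x : ℕ => (x : ℤ)) A =
        Finset.image (fun i : Fin p => a + (i : ℤ) * p ^ s + k i * p ^ (s + 1))
          Finset.univ) :
    ∀ B : Set ℕ, (∃ n₀ : ℕ, ∀ n ≥ n₀, 1 ≤ rep (↑A) B n) →
      Filter.Tendsto (fun x : ℕ => (cnt (↑A) x : ℤ) * (cnt B x : ℤ) - (x : ℤ))
        Filter.atTop Filter.atTop := by
  rintro B ⟨n₀, hn₀⟩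
  by_contra hlim
  have hrep : ∀ᶠ n in atTop, rep (↑A) B n = 1 := by
    by_contra hfreq
    exact hlim (tendsto_cnt_mul_cnt_sub_of_frequently hn₀ (not_eventually.mp hfreq))
  obtain ⟨N, hN⟩ := eventually_atTop.mp hrep
  exact hform (isStandardPrimeTile_of_rep_eq_one hp hcard hN)
end

section
/- For every composite number n > 0 there exist a set A of nonnegative integers with |A| = n and an additive complement B of A such that A(x)B(x) − x = O(1), while A is not of the form {a + i·n^s + k_i·n^{s+1} : i = 0, ..., n−1} for any integers a ≥ 0, s ≥ 0, k_i. -/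
lemma cnt_le_aux (S : Set ℕ) (x : ℕ) : cnt S x ≤ x + 1 := by
  have h1 : (S ∩ Set.Iic x) ⊆ Set.Iic x := Set.inter_subset_right
  calc cnt S x ≤ (Set.Iic x).ncard := Set.ncard_le_ncard h1 (Set.finite_Iic x)
  _ = x + 1 := by rw [← Finset.coe_Iic, Set.ncard_coe_finset, Nat.card_Iic]

theorem stmt11 (n : ℕ) (hcomp : ∃ d₁ d₂ : ℕ, 1 < d₁ ∧ 1 < d₂ ∧ n = d₁ * d₂) :
    ∃ (A : Finset ℕ) (B : Set ℕ),
      A.card = n ∧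
      (∃ n₀ : ℕ, ∀ m ≥ n₀, 1 ≤ rep (↑A) B m) ∧
      (∃ C : ℤ, ∀ x : ℕ, |(cnt (↑A) x : ℤ) * (cnt B x : ℤ) - (x : ℤ)| ≤ C) ∧
      ¬ ∃ (a : ℤ), 0 ≤ a ∧ ∃ (s : ℕ) (k : Fin n → ℤ),
        Finset.image (fun x : ℕ => (x : ℤ)) A =
          Finset.image (fun i : Fin n => a + (i : ℤ) * n ^ s + k i * n ^ (s + 1))
            Finset.univ := by
  obtain ⟨d₁, d₂, hd₁, hd₂, hn⟩ := hcomp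
  have hd₁0 : 0 < d₁ := by omega
  have hn0 : 0 < n := by rw [hn]; positivity
  have hd₁n : d₁ < n := by nlinarith
  have hn2 : 2 ≤ n := by nlinarith
  set c : ℕ := d₁ * d₁ * d₂ with hc
  have hcn : c = d₁ * n := by rw [hn, hc]; ring
  have hc0 : 0 < c := by positivity
  set A : Finset ℕ := (Finset.range n).image (fun m => m % d₁ + (m / d₁) * c) with hA
  set f : ℕ → ℕ := fun k => d₁ * (k % n) + n * n * (k / n) with hf
  set B : Set ℕ := Set.range f with hB
  -- elements of A
  have hmemA : ∀ i j : ℕ, i < d₁ → j < d₂ → i + j * c ∈ A := by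
    intro i j hi hj
    refine Finset.mem_image.mpr ⟨i + d₁ * j, Finset.mem_range.mpr ?_, ?_⟩
    · rw [hn]; nlinarith
    · have h1 : (i + d₁ * j) % d₁ = i := by
        rw [Nat.add_mul_mod_self_left, Nat.mod_eq_of_lt hi]
      have h2 : (i + d₁ * j) / d₁ = j := by
        rw [Nat.add_mul_div_left _ _ hd₁0, Nat.div_eq_of_lt hi, Nat.zero_add]
      rw [h1, h2]
  -- description of members
  have hmemA' : ∀ v ∈ A, ∃ i j : ℕ, i < d₁ ∧ j < d₂ ∧ v = i + j * c := by
    intro v hv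
    obtain ⟨m, hm, rfl⟩ := Finset.mem_image.mp hv
    refine ⟨m % d₁, m / d₁, Nat.mod_lt _ hd₁0, ?_, rfl⟩
    have := Finset.mem_range.mp hm
    rw [hn] at this
    exact Nat.div_lt_of_lt_mul (by linarith [this])
  have hd₁c : d₁ ≤ c := by nlinarith
  have hAcard : A.card = n := by
    rw [hA, Finset.card_image_of_injOn, Finset.card_range]
    intro m₁ h₁ m₂ h₂ heq
    simp only [] at heq
    have hi₁ : m₁ % d₁ < d₁ := Nat.mod_lt _ hd₁0
    have hi₂ : m₂ % d₁ < d₁ := Nat.mod_lt _ hd₁0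
    have hmod : m₁ % d₁ = m₂ % d₁ := by
      have g1 : (m₁ % d₁ + (m₁ / d₁) * c) % c = m₁ % d₁ := by
        rw [Nat.add_mul_mod_self_right, Nat.mod_eq_of_lt (lt_of_lt_of_le hi₁ hd₁c)]
      have g2 : (m₂ % d₁ + (m₂ / d₁) * c) % c = m₂ % d₁ := by
        rw [Nat.add_mul_mod_self_right, Nat.mod_eq_of_lt (lt_of_lt_of_le hi₂ hd₁c)]
      rw [← g1, ← g2, heq]
    have hdiv : m₁ / d₁ = m₂ / d₁ := by
      have h3 : (m₁ / d₁) * c = (m₂ / d₁) * c := by omega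
      exact Nat.eq_of_mul_eq_mul_right hc0 h3
    have e1 := Nat.mod_add_div m₁ d₁
    have e2 := Nat.mod_add_div m₂ d₁
    rw [hmod, hdiv] at e1
    exact e1.symm.trans e2
  -- strict mono of f
  have hfs : StrictMono f := by
    apply strictMono_nat_of_lt_succ
    intro kk
    have hm := Nat.mod_lt kk hn0
    rcases lt_or_ge (kk % n + 1) n with h | h
    · have h1 : (kk + 1) % n = kk % n + 1 := by
        rw [Nat.add_mod, Nat.mod_eq_of_lt (show 1 < n from hn2),
          Nat.mod_eq_of_lt h]
      have h2 : (kk + 1) / n = kk / n := by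
        rw [Nat.succ_div, if_neg]
        · simp
        · intro hdvd
          obtain ⟨q, hq⟩ := hdvd
          have : (kk + 1) % n = 0 := by rw [hq]; exact Nat.mul_mod_right n q
          omega
      simp only [hf]
      rw [h1, h2]
      have : d₁ * (kk % n + 1) = d₁ * (kk % n) + d₁ := by ring
      omega
    · have hmn : kk % n + 1 = n := by omega
      have hk3 := Nat.mod_add_div kk n
      have hmul : n * (kk / n + 1) = n * (kk / n) + n := by ring
      have h2 : kk + 1 = n * (kk / n + 1) := by linarith
      have h1 : (kk + 1) % n = 0 := by rw [h2]; exact Nat.mul_mod_right n _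
      have h2' : (kk + 1) / n = kk / n + 1 := by
        rw [h2]; exact Nat.mul_div_cancel_left _ hn0
      simp only [hf]
      rw [h1, h2', Nat.mul_zero]
      have e : n * n * (kk / n + 1) = n * n * (kk / n) + n * n := by ring
      have hlt : d₁ * (kk % n) < n * n := by nlinarith
      linarith
  -- identity for f
  have hfid : ∀ k, f k + (n - d₁) * (k % n) = n * k := by
    intro k
    have h3 := Nat.mod_add_div k n
    have hd : d₁ + (n - d₁) = n := by omega
    calc f k + (n - d₁) * (k % n)
        = (d₁ + (n - d₁)) * (k % n) + n * n * (k / n) := by simp only [hf]; ring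
      _ = n * (k % n) + n * n * (k / n) := by rw [hd]
      _ = n * (k % n + n * (k / n)) := by ring
      _ = n * k := by rw [h3]
  have hfle : ∀ k, f k ≤ n * k := fun k => by
    have := hfid k; omega
  have hfge : ∀ k, n * k ≤ f k + n * n := by
    intro k
    have h1 := hfid k
    have h2 : (n - d₁) * (k % n) ≤ n * n :=
      Nat.mul_le_mul (by omega) (le_of_lt (Nat.mod_lt _ hn0))
    omega
  -- cnt B bounds
  have hcntB : ∀ x : ℕ, x < n * cnt B x ∧ n * cnt B x ≤ x + n * n + n := by
    intro x
    have hex : ∃ kk, x < f kk :=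
      ⟨x + 1, lt_of_lt_of_le (Nat.lt_succ_self x) hfs.le_apply⟩
    set K := Nat.find hex with hK
    have hKx : x < f K := Nat.find_spec hex
    have hKmin : ∀ kk, kk < K → f kk ≤ x := fun kk hkk =>
      le_of_not_gt (Nat.find_min hex hkk)
    have hK0 : 0 < K := by
      rcases Nat.eq_zero_or_pos K with h | h
      · exfalso
        have hf0 : f 0 = 0 := by simp [hf]
        rw [h, hf0] at hKx; omega
      · exact h
    have hBx : B ∩ Set.Iic x = f '' Set.Iio K := by
      ext b
      constructor
      · rintro ⟨⟨kk, rfl⟩, hbx⟩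
        refine ⟨kk, ?_, rfl⟩
        by_contra hko
        simp only [Set.mem_Iio, not_lt] at hko
        exact absurd hbx (not_le.mpr (lt_of_lt_of_le hKx (hfs.monotone hko)))
      · rintro ⟨kk, hkk, rfl⟩
        exact ⟨⟨kk, rfl⟩, hKmin kk hkk⟩
    have hcB : cnt B x = K := by
      show (B ∩ Set.Iic x).ncard = K
      rw [hBx, Set.ncard_image_of_injective _ hfs.injective,
        ← Finset.coe_Iio, Set.ncard_coe_finset, Nat.card_Iio]
    constructor
    · rw [hcB]; exact lt_of_lt_of_le hKx (hfle K)
    · rw [hcB]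
      have hKK : K = (K - 1) + 1 := by omega
      rw [hKK]
      have h1 : f (K - 1) ≤ x := hKmin (K - 1) (by omega)
      have h2 := hfge (K - 1)
      have h3 : n * ((K - 1) + 1) = n * (K - 1) + n := by ring
      linarith
  -- cnt A for large x
  have hcntA : ∀ x : ℕ, n * n ≤ x → cnt (↑A) x = n := by
    intro x hx
    have hsub : (↑A : Set ℕ) ⊆ Set.Iic x := by
      intro v hv
      obtain ⟨i, j, hi, hj, rfl⟩ := hmemA' v hv
      simp only [Set.mem_Iic]
      have : i + j * c < n * n := by
        calc i + j * c < c + j * c := by omega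
          _ = (j + 1) * c := by ring
          _ ≤ d₂ * c := Nat.mul_le_mul_right _ hj
          _ = n * n := by rw [hn, hc]; ring
      omega
    show ((↑A : Set ℕ) ∩ Set.Iic x).ncard = n
    rw [Set.inter_eq_left.mpr hsub, Set.ncard_coe_finset, hAcard]
  have hcntAle : ∀ x : ℕ, cnt (↑A) x ≤ n := by
    intro x
    calc cnt (↑A) x ≤ (↑A : Set ℕ).ncard :=
          Set.ncard_le_ncard Set.inter_subset_left A.finite_toSet
      _ = n := by rw [Set.ncard_coe_finset, hAcard]
  refine ⟨A, B, hAcard, ?_, ?_, ?_⟩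
  · -- additive complement
    refine ⟨0, fun m _ => ?_⟩
    have hrepr : ∃ a b : ℕ, a ∈ A ∧ b ∈ B ∧ a + b = m := by
      set i := m % d₁ with hi
      set r := m / d₁ with hr
      set v := r % n with hv
      set w := r / n with hw
      set j := w % d₂ with hj
      set t := w / d₂ with ht
      refine ⟨i + j * c, d₁ * v + n * n * t, hmemA i j (Nat.mod_lt _ hd₁0) (Nat.mod_lt _ (by omega)), ?_, ?_⟩
      · refine ⟨v + n * t, ?_⟩
        simp only [hf]
        have h1 : (v + n * t) % n = v := by
          rw [Nat.add_mul_mod_self_left, Nat.mod_eq_of_lt (Nat.mod_lt _ hn0)]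
        have h2 : (v + n * t) / n = t := by
          rw [Nat.add_mul_div_left _ _ hn0, Nat.div_eq_of_lt (Nat.mod_lt _ hn0), Nat.zero_add]
        rw [h1, h2]
      · have e1 : i + d₁ * r = m := Nat.mod_add_div m d₁
        have e2 : v + n * w = r := Nat.mod_add_div r n
        have e3 : j + d₂ * t = w := Nat.mod_add_div w d₂
        rw [← e1, ← e2, ← e3, hc, hn]
        ring
    obtain ⟨a, b, haA, hbB, hab⟩ := hrepr
    have hfin : {q : ℕ × ℕ | q.1 ∈ (↑A : Set ℕ) ∧ q.2 ∈ B ∧ q.1 + q.2 = m}.Finite := by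
      apply Set.Finite.subset ((Set.finite_Iic m).prod (Set.finite_Iic m))
      rintro ⟨p, q⟩ ⟨_, _, hpq⟩
      simp only [Set.mem_prod, Set.mem_Iic]
      omega
    have hne : {q : ℕ × ℕ | q.1 ∈ (↑A : Set ℕ) ∧ q.2 ∈ B ∧ q.1 + q.2 = m}.Nonempty :=
      ⟨(a, b), by simpa using ⟨haA, hbB, hab⟩⟩
    exact (Set.ncard_pos hfin).mpr hne
  · -- O(1)
    refine ⟨(n : ℤ) ^ 3 + n ^ 2 + n, fun x => ?_⟩
    rcases le_or_gt (n * n) x with h | h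
    · rw [hcntA x h]
      obtain ⟨hb1, hb2⟩ := hcntB x
      have c1 : (x : ℤ) < (n : ℤ) * (cnt B x : ℤ) := by exact_mod_cast hb1
      have c2 : (n : ℤ) * (cnt B x : ℤ) ≤ (x : ℤ) + n * n + n := by exact_mod_cast hb2
      have hn3 : (0 : ℤ) ≤ (n : ℤ) ^ 3 := by positivity
      have hsq : ((n : ℤ)) ^ 2 = (n : ℤ) * n := by ring
      rw [abs_le]
      constructor <;> linarith
    · have h1 : cnt (↑A) x ≤ n := hcntAle x
      have h2 : cnt B x ≤ x + 1 := cnt_le_aux B x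
      have c1 : (cnt (↑A) x : ℤ) ≤ n := by exact_mod_cast h1
      have c2 : (cnt B x : ℤ) ≤ (x : ℤ) + 1 := by exact_mod_cast h2
      have c3 : (x : ℤ) < (n : ℤ) * n := by exact_mod_cast h
      have c4 : (0 : ℤ) ≤ (cnt (↑A) x : ℤ) := Int.natCast_nonneg _
      have c5 : (0 : ℤ) ≤ (cnt B x : ℤ) := Int.natCast_nonneg _
      have c6 : (0 : ℤ) ≤ (x : ℤ) := Int.natCast_nonneg _
      have c7 : (0 : ℤ) ≤ (n : ℤ) := Int.natCast_nonneg _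
      have c8 : (cnt (↑A) x : ℤ) * (cnt B x : ℤ) ≤ (n : ℤ) * ((x : ℤ) + 1) :=
        mul_le_mul c1 c2 c5 c7
      have c9 : (n : ℤ) * ((x : ℤ) + 1) ≤ (n : ℤ) * ((n : ℤ) * n) :=
        mul_le_mul_of_nonneg_left (by linarith) c7
      have c10 : (n : ℤ) * ((n : ℤ) * n) = (n : ℤ) ^ 3 := by ring
      have c11 : ((n : ℤ)) ^ 2 = (n : ℤ) * n := by ring
      have c12 : (0 : ℤ) ≤ (n : ℤ) ^ 3 := pow_nonneg c7 3
      have c13 : (0 : ℤ) ≤ (cnt (↑A) x : ℤ) * (cnt B x : ℤ) := mul_nonneg c4 c5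
      rw [abs_le]
      constructor <;> linarith
  · -- not of the special form
    rintro ⟨a, ha, s, k, hEq⟩
    have h0A : (0 : ℤ) ∈ Finset.image (fun x : ℕ => (x : ℤ)) A :=
      Finset.mem_image.mpr ⟨0, by simpa using hmemA 0 0 (by omega) (by omega), by norm_num⟩
    have h1A : (1 : ℤ) ∈ Finset.image (fun x : ℕ => (x : ℤ)) A :=
      Finset.mem_image.mpr ⟨1, by simpa using hmemA 1 0 hd₁ (by omega), by norm_num⟩
    have hcA : ((c : ℕ) : ℤ) ∈ Finset.image (fun x : ℕ => (x : ℤ)) A :=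
      Finset.mem_image.mpr ⟨c, by simpa using hmemA 0 1 (by omega) hd₂, by norm_num⟩
    rw [hEq] at h0A h1A hcA
    obtain ⟨i₀, -, e₀⟩ := Finset.mem_image.mp h0A
    obtain ⟨i₁, -, e₁⟩ := Finset.mem_image.mp h1A
    obtain ⟨i₂, -, e₂⟩ := Finset.mem_image.mp hcA
    -- s = 0
    have hdvd : ((n : ℤ)) ^ s ∣ 1 :=
      ⟨((i₁ : ℤ) - (i₀ : ℤ)) + (k i₁ - k i₀) * n, by linear_combination e₀ - e₁⟩
    have hns : ((n : ℤ)) ^ s = 1 := Int.eq_one_of_dvd_one (by positivity) hdvd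
    have hs0 : s = 0 := by
      by_contra hs
      have h4 : (2 : ℤ) ≤ (n : ℤ) := by exact_mod_cast hn2
      have : (1 : ℤ) < (n : ℤ) ^ s := one_lt_pow₀ (by linarith) hs
      linarith
    subst hs0
    have hcZ : ((c : ℕ) : ℤ) = (d₁ : ℤ) * n := by exact_mod_cast hcn
    rw [hcZ] at e₂
    have hne : i₀ ≠ i₂ := by
      rintro rfl
      have hc0' : (0 : ℤ) < (d₁ : ℤ) * n := by positivity
      linarith [e₀, e₂]
    have hdvd2 : (n : ℤ) ∣ ((i₂ : ℤ) - (i₀ : ℤ)) :=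
      ⟨k i₀ - k i₂ + d₁, by linear_combination e₂ - e₀⟩
    have hb₀ : (i₀ : ℤ) < n ∧ 0 ≤ (i₀ : ℤ) := by
      have := i₀.isLt; constructor <;> omega
    have hb₂ : (i₂ : ℤ) < n ∧ 0 ≤ (i₂ : ℤ) := by
      have := i₂.isLt; constructor <;> omega
    have hne' : ((i₂ : ℤ) - (i₀ : ℤ)) ≠ 0 := by
      intro hzero
      apply hne
      have : (i₀ : ℤ) = (i₂ : ℤ) := by linarith
      have hv : (i₀ : ℕ) = (i₂ : ℕ) := by exact_mod_cast this
      exact Fin.ext hv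
    have hle : (n : ℤ) ≤ |(i₂ : ℤ) - (i₀ : ℤ)| :=
      Int.le_of_dvd (abs_pos.mpr hne') ((dvd_abs _ _).mpr hdvd2)
    have habs : |(i₂ : ℤ) - (i₀ : ℤ)| < n := by
      rw [abs_lt]
      constructor <;> linarith [hb₀.1, hb₀.2, hb₂.1, hb₂.2]
    linarith
end

section
/- Let A ⊆ ℕ be finite and B ⊆ ℕ be such that R_{A+B}(n) = 1 for all n ≥ n₁. Then, with f_A and f_B the (formal) power series Σ_{a∈A} z^a and Σ_{b∈B} z^b, there exist polynomials p₁(z), F_B(z), T(z) with integer coefficients and a positive integer M such that (1 − z^M)·f_A(z)·F_B(z) + f_A(z)·T(z) = (1 − z^M)·p₁(z) + (1 + z + ... + z^{M−1})·z^{n₁} as an identity of polynomials, where f_B(z) = F_B(z) + T(z)/(1 − z^M). -/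
/-!
Once every large `n` has exactly one representation, whether `k + (max A - min A)` lies in `B`
is decided by which of `k, …, k + (max A - min A) - 1` lie in `B`: `k + max A` has one
representation, and its summand `min A` works exactly when no other summand does. There are
finitely many such windows, so `B` is eventually periodic, say with period `M` from `N` on.
Then `(1 - z^M) f_B` is the polynomial `F_B + T`, where `F_B` and `F_B + T` are the truncations
of `f_B` at `N` and `N + M`, and multiplying `f_A f_B = ∑ R_{A+B}(n) zⁿ = p₁ + z^{n₁} / (1 - z)`
by `1 - z^M` gives the polynomial identity. The same telescoping for `|z| < 1` gives the
analytic one.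
-/

open Polynomial

theorem eventually_periodic_of_window {B : Set ℕ} {n₀ L : ℕ}
    (hdet : ∀ k k', n₀ ≤ k → n₀ ≤ k' → (∀ i < L, k + i ∈ B ↔ k' + i ∈ B) →
      (k + L ∈ B ↔ k' + L ∈ B)) :
    ∃ M, 0 < M ∧ ∃ N, ∀ m ≥ N, m + M ∈ B ↔ m ∈ B := by
  obtain ⟨x, y, hxy, hwin⟩ := Finite.exists_ne_map_eq_of_infinite
    fun c (i : Fin L) => n₀ + c + i ∈ B
  wlog hlt : x < y generalizing x y
  · exact this y x hxy.symm hwin.symm (by omega)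
  have hagree : ∀ j, n₀ + x + j ∈ B ↔ n₀ + y + j ∈ B := by
    intro j
    induction j using Nat.strong_induction_on with
    | _ j ih =>
      by_cases hj : j < L
      · exact Iff.of_eq (congrFun hwin ⟨j, hj⟩)
      · have := hdet (n₀ + x + (j - L)) (n₀ + y + (j - L)) (by omega) (by omega) fun i hi => by
          simpa only [add_assoc] using ih (j - L + i) (by omega)
        simpa only [add_assoc, Nat.sub_add_cancel (not_lt.mp hj)] using this
  refine ⟨y - x, by omega, n₀ + x, fun m hm => ?_⟩
  have := hagree (m - (n₀ + x))
  rw [show n₀ + x + (m - (n₀ + x)) = m by omega,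
    show n₀ + y + (m - (n₀ + x)) = m + (y - x) by omega] at this
  exact this.symm

namespace PowerSeries

theorem one_sub_X_pow_mul_mk_one {R : Type*} [CommRing R] (M : ℕ) :
    (1 - X ^ M) * mk 1 = ∑ i ∈ Finset.range M, (X : R⟦X⟧) ^ i := by
  rw [← mul_neg_geom_sum, mul_comm (1 - X), mul_assoc, mul_comm (1 - X),
    mk_one_mul_one_sub_eq_one, mul_one]

theorem eq_trunc_add_X_pow_mul_mk_one {R : Type*} [Semiring R] {f : R⟦X⟧} {n₀ : ℕ}
    (h : ∀ n ≥ n₀, coeff n f = 1) :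
    f = (trunc n₀ f : R⟦X⟧) + X ^ n₀ * mk 1 := by
  ext n
  rw [map_add, coeff_X_pow_mul', Polynomial.coeff_coe, coeff_trunc]
  by_cases hn : n < n₀
  · simp [hn, Nat.not_le.mpr hn]
  · simp [hn, h n (not_lt.mp hn), not_lt.mp hn]

theorem one_sub_X_pow_mul_eq_of_periodic {R : Type*} [Ring R] {f : R⟦X⟧} {M N : ℕ}
    (hper : ∀ m ≥ N, coeff (m + M) f = coeff m f) :
    (1 - X ^ M) * f = (trunc (N + M) f : R⟦X⟧) - X ^ M * (trunc N f : R⟦X⟧) := by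
  ext n
  rw [sub_mul, one_mul, map_sub, map_sub, coeff_X_pow_mul', coeff_X_pow_mul',
    Polynomial.coeff_coe, Polynomial.coeff_coe, coeff_trunc, coeff_trunc]
  by_cases hn : n < N + M
  · by_cases hM : M ≤ n
    · simp [hn, hM, show n - M < N by omega]
    · simp [hn, hM]
  · have hM : M ≤ n := by omega
    have := hper (n - M) (by omega)
    rw [Nat.sub_add_cancel hM] at this
    simp [hn, hM, show ¬ n - M < N by omega, this]

end PowerSeries

@[norm_cast]
theorem Polynomial.coe_finset_sum {R ι : Type*} [Semiring R] (s : Finset ι) (f : ι → R[X]) :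
    ((∑ i ∈ s, f i : R[X]) : PowerSeries R) = ∑ i ∈ s, (f i : PowerSeries R) :=
  map_sum Polynomial.coeToPowerSeries.ringHom f s

theorem one_sub_pow_mul_tsum_of_periodic {R : Type*} [CommRing R] [TopologicalSpace R]
    [IsTopologicalRing R] [T2Space R] {c : ℕ → R} {z : R} {M N : ℕ}
    (hs : Summable fun n => c n * z ^ n) (hper : ∀ m ≥ N, c (m + M) = c m) :
    (1 - z ^ M) * ∑' n, c n * z ^ n =
      ∑ n ∈ Finset.range (N + M), c n * z ^ n -
        z ^ M * ∑ n ∈ Finset.range N, c n * z ^ n := by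
  set a : ℕ → R := fun n => c n * z ^ n
  have hshift : Summable fun n => a (n + M) := (summable_nat_add_iff M).mpr hs
  have htail : ∑' n, (a (n + M) - z ^ M * a n) =
      ∑ n ∈ Finset.range N, (a (n + M) - z ^ M * a n) := by
    refine tsum_eq_sum fun n hn => ?_
    rw [Finset.mem_range, not_lt] at hn
    simp only [a, hper n hn, pow_add]
    ring
  calc (1 - z ^ M) * ∑' n, a n
      = ∑ n ∈ Finset.range M, a n + ∑' n, (a (n + M) - z ^ M * a n) := by
        rw [hshift.tsum_sub (hs.mul_left _), hs.tsum_mul_left, ← hs.sum_add_tsum_nat_add M]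
        ring
    _ = _ := by
        rw [htail, Finset.sum_sub_distrib, ← Finset.mul_sum, add_comm N, Finset.sum_range_add]
        simp only [add_comm M]
        ring

open Finset in
theorem rep_eq_card_filter (A : Finset ℕ) (B : Set ℕ) [DecidablePred (· ∈ B)] (n : ℕ) :
    rep ↑A B n = #{a ∈ A | a ≤ n ∧ n - a ∈ B} := by
  rw [rep, ← Set.ncard_coe_finset, ← Set.ncard_image_of_injective _ (f := fun a => (a, n - a))
    fun a b h => (Prod.ext_iff.mp h).1]
  congr 1
  ext ⟨a, b⟩
  simp only [Set.mem_ofPred_eq, coe_filter, Set.mem_image, Prod.mk.injEq]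
  constructor
  · rintro ⟨ha, hb, rfl⟩
    exact ⟨a, ⟨ha, by omega, by rwa [Nat.add_sub_cancel_left]⟩, rfl, by omega⟩
  · rintro ⟨a, ⟨ha, han, hb⟩, rfl, rfl⟩
    exact ⟨ha, hb, by omega⟩

theorem sub_mem_iff_of_rep_eq_one {A B : Set ℕ} {n a : ℕ} (h : rep A B n = 1) (ha : a ∈ A)
    (han : a ≤ n) : n - a ∈ B ↔ ∀ a' ∈ A, a' ≤ n → n - a' ∈ B → a' = a := by
  obtain ⟨⟨a₀, b₀⟩, hq⟩ := Set.ncard_eq_one.mp h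
  have mem_iff (x y : ℕ) : (x ∈ A ∧ y ∈ B ∧ x + y = n) ↔ x = a₀ ∧ y = b₀ := by
    simpa using Set.ext_iff.mp hq (x, y)
  constructor
  · intro hb a' ha' ha'n hb'
    rw [((mem_iff a (n - a)).mp ⟨ha, hb, by omega⟩).1,
      ((mem_iff a' (n - a')).mp ⟨ha', hb', by omega⟩).1]
  · intro huniq
    obtain ⟨ha₀, hb₀, hsum⟩ := (mem_iff a₀ b₀).mpr ⟨rfl, rfl⟩
    obtain rfl := huniq a₀ ha₀ (by omega) (by rwa [← hsum, Nat.add_sub_cancel_left])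
    rwa [← hsum, Nat.add_sub_cancel_left]

theorem eventually_periodic_of_rep_eq_one {A : Finset ℕ} {B : Set ℕ} {n₁ : ℕ}
    (hrep : ∀ n ≥ n₁, rep ↑A B n = 1) :
    ∃ M, 0 < M ∧ ∃ N, ∀ m ≥ N, m + M ∈ B ↔ m ∈ B := by
  have hA : A.Nonempty := by
    obtain ⟨q, hq⟩ := Set.ncard_eq_one.mp (hrep n₁ le_rfl)
    exact ⟨q.1, (Set.ext_iff.mp hq q).mpr rfl |>.1⟩
  set a₀ := A.min' hA
  set a₁ := A.max' hA
  have hmin : ∀ a ∈ A, a₀ ≤ a := fun a ha => A.min'_le a ha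
  have hmax : ∀ a ∈ A, a ≤ a₁ := fun a ha => A.le_max' a ha
  have hlast (k : ℕ) (hk : n₁ ≤ k) :
      k + (a₁ - a₀) ∈ B ↔ ∀ a ∈ A, a ≠ a₀ → k + (a₁ - a) ∉ B := by
    have := sub_mem_iff_of_rep_eq_one (hrep (k + a₁) (by omega)) (A.min'_mem hA)
      (by have := hmin _ (A.max'_mem hA); omega)
    have hsub (a : ℕ) (ha : a ∈ A) : k + a₁ - a = k + (a₁ - a) := by
      have := hmax a ha; omega
    rw [hsub _ (A.min'_mem hA)] at this
    constructor
    · intro hB a ha hne hB'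
      exact hne (this.mp hB a ha (by have := hmax a ha; omega) (by rwa [hsub a ha]))
    · intro h
      refine this.mpr fun a ha _ hB => by_contra fun hne => h a ha hne ?_
      rwa [← hsub a ha]
  refine eventually_periodic_of_window (n₀ := n₁) (L := a₁ - a₀) fun k k' hk hk' hw => ?_
  rw [hlast k hk, hlast k' hk']
  refine forall₂_congr fun a ha => imp_congr_right fun hne => not_congr (hw _ ?_)
  have := hmin a ha
  have := hmax a ha
  omega

/-- The generating series `f_B = ∑_{b ∈ B} zᵇ`. -/
noncomputable def indicatorSeries (B : Set ℕ) : PowerSeries ℤ :=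
  PowerSeries.mk (B.indicator 1)

@[simp]
theorem coeff_indicatorSeries (B : Set ℕ) (n : ℕ) :
    PowerSeries.coeff n (indicatorSeries B) = B.indicator 1 n :=
  PowerSeries.coeff_mk _ _

theorem coeff_indicatorSeries_add_of_periodic {B : Set ℕ} {M N : ℕ}
    (hper : ∀ m ≥ N, m + M ∈ B ↔ m ∈ B) (m : ℕ) (hm : N ≤ m) :
    PowerSeries.coeff (m + M) (indicatorSeries B) = PowerSeries.coeff m (indicatorSeries B) := by
  classical
  simp only [coeff_indicatorSeries, Set.indicator_apply, hper m hm, Pi.one_apply]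

theorem coeff_sum_X_pow_mul_indicatorSeries (A : Finset ℕ) (B : Set ℕ) (n : ℕ) :
    PowerSeries.coeff n (((∑ a ∈ A, X ^ a : ℤ[X]) : PowerSeries ℤ) * indicatorSeries B) =
      rep ↑A B n := by
  classical
  rw [rep_eq_card_filter, Finset.natCast_card_filter]
  push_cast
  rw [Finset.sum_mul, map_sum]
  refine Finset.sum_congr rfl fun a _ => ?_
  rw [PowerSeries.coeff_X_pow_mul', coeff_indicatorSeries]
  by_cases han : a ≤ n <;> by_cases hB : n - a ∈ B <;> simp [han, hB]

theorem tsum_pow_eq_aeval_trunc_of_periodic {B : Set ℕ} {M N : ℕ} (hM : 0 < M)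
    (hper : ∀ m ≥ N, m + M ∈ B ↔ m ∈ B) {z : ℂ} (hz : ‖z‖ < 1) :
    ∑' b : B, z ^ (b : ℕ) =
      aeval z (PowerSeries.trunc N (indicatorSeries B)) +
        aeval z (PowerSeries.trunc (N + M) (indicatorSeries B) -
          PowerSeries.trunc N (indicatorSeries B)) / (1 - z ^ M) := by
  set c : ℕ → ℂ := fun n => ((PowerSeries.coeff n (indicatorSeries B) : ℤ) : ℂ)
  have hs : Summable fun n => c n * z ^ n := by
    refine .of_norm_bounded (summable_geometric_of_lt_one (norm_nonneg z) hz) fun n => ?_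
    by_cases hn : n ∈ B <;> simp [c, hn]
  have hfB : ∑' b : B, z ^ (b : ℕ) = ∑' n, c n * z ^ n := by
    rw [tsum_subtype]
    refine tsum_congr fun n => ?_
    by_cases hn : n ∈ B <;> simp [c, hn]
  have haeval : ∀ K, aeval z (PowerSeries.trunc K (indicatorSeries B)) =
      ∑ n ∈ Finset.range K, c n * z ^ n := fun K => by
    simp only [aeval_def, PowerSeries.eval₂_trunc_eq_sum_range, algebraMap_int_eq, eq_intCast, c]
  have hne : 1 - z ^ M ≠ 0 := fun h => by
    have : ‖z ^ M‖ < 1 := by rw [norm_pow]; exact pow_lt_one₀ (norm_nonneg z) hz hM.ne'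
    simp [← sub_eq_zero.mp h] at this
  have key := one_sub_pow_mul_tsum_of_periodic (M := M) hs fun m hm =>
    congrArg Int.cast (coeff_indicatorSeries_add_of_periodic hper m hm)
  rw [hfB, map_sub, haeval, haeval, ← sub_eq_iff_eq_add', eq_div_iff hne]
  linear_combination key

theorem stmt14 (A : Finset ℕ) (B : Set ℕ) (n₁ : ℕ)
    (hrep : ∀ n ≥ n₁, rep (↑A) B n = 1) :
    ∃ (p₁ F T : Polynomial ℤ) (M : ℕ), 0 < M ∧
      (1 - (X : Polynomial ℤ) ^ M) * (∑ a ∈ A, X ^ a) * F + (∑ a ∈ A, X ^ a) * T =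
        (1 - (X : Polynomial ℤ) ^ M) * p₁ +
          (∑ i ∈ Finset.range M, (X : Polynomial ℤ) ^ i) * X ^ n₁ ∧
      ∀ z : ℂ, ‖z‖ < 1 →
        (∑' b : B, z ^ (b : ℕ)) =
          Polynomial.aeval z F + Polynomial.aeval z T / (1 - z ^ M) := by
  obtain ⟨M, hM, N, hper⟩ := eventually_periodic_of_rep_eq_one hrep
  set fA : ℤ[X] := ∑ a ∈ A, X ^ a
  set S := indicatorSeries B
  refine ⟨PowerSeries.trunc n₁ ((fA : PowerSeries ℤ) * S), PowerSeries.trunc N S,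
    PowerSeries.trunc (N + M) S - PowerSeries.trunc N S, M, hM, ?_,
    fun z hz => tsum_pow_eq_aeval_trunc_of_periodic hM hper hz⟩
  have hfAfB := PowerSeries.eq_trunc_add_X_pow_mul_mk_one (f := (fA : PowerSeries ℤ) * S)
    fun n hn => by rw [coeff_sum_X_pow_mul_indicatorSeries, hrep n hn, Nat.cast_one]
  have hfB := PowerSeries.one_sub_X_pow_mul_eq_of_periodic
    (coeff_indicatorSeries_add_of_periodic hper)
  rw [← Polynomial.coe_inj]
  push_cast
  linear_combination -(fA : PowerSeries ℤ) * hfB + (1 - PowerSeries.X ^ M) * hfAfB +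
    PowerSeries.X ^ n₁ * PowerSeries.one_sub_X_pow_mul_mk_one (R := ℤ) M
end
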